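/- Consider n players with private strategy sets S_i ⊆ ℝ^{d_i} that are closed and convex, convex differentiable costs J_i : ℝ^{d_i} → ℝ with gradients ∇J_i, and an interaction graph given by a symmetric irreflexive relation E on {1,…,n}; for each (i,j) ∈ E there is an affine coupled constraint map h_{i,j} : ℝ^{d_i} × ℝ^{d_j} → ℝ^{q} satisfying the symmetry h_{i,j}(x, y) = h_{j,i}(y, x). Let K = {s | s_i ∈ S_i for all i, and h_{i,j}(s_i, s_j) ≤ 0 componentwise for all (i,j) ∈ E}. Suppose s* ∈ K and there exist multipliers λ_{i,j} ∈ ℝ^{q} for all (i,j) ∈ E such that for all (i,j) ∈ E: λ_{i,j} ≥ 0 componentwise, λ_{i,j} = λ_{j,i}, ⟨λ_{i,j}, h_{i,j}(s*_i, s*_j)⟩ = 0, and the per-player stationarity condition holds: for every i and every y ∈ S_i, ⟨∇J_i(s*_i) + Σ_{j : (i,j) ∈ E} (D_x h_{i,j}(s*_i, s*_j))ᵀ λ_{i,j}, y − s*_i⟩ ≥ 0, where D_x h_{i,j} denotes the Jacobian of h_{i,j} with respect to its first argument. Then s* is a variational equilibrium: Σ_{i=1}^n ⟨∇J_i(s_i),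 s_i − s*_i⟩ ≥ 0 for every s ∈ K. -/

import Mathlib

open Matrix

/-- The continuous linear map `w ↦ ⟨g, w⟩` on `ℝᵐ`. -/
noncomputable def dotCLM {m : ℕ} (g : Fin m → ℝ) : (Fin m → ℝ) →L[ℝ] ℝ :=
  ∑ j, g j • ContinuousLinearMap.proj j

/-!
Summing the stationarity conditions of all players at a feasible `s` bounds
`Σ_i ⟨∇J_i(s*_i), s_i − s*_i⟩` below by minus the coupling term
`Σ_i Σ_{j ~ i} ⟨λ_{i,j}, A_{i,j}(s_i − s*_i)⟩`. Because `λ_{i,j} = λ_{j,i}` and the symmetry of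
`h` gives `A_{j,i} = B_{i,j}`, the terms of an edge and of its reverse add up to
`⟨λ_{i,j}, h_{i,j}(s_i, s_j) − h_{i,j}(s*_i, s*_j)⟩ = ⟨λ_{i,j}, h_{i,j}(s_i, s_j)⟩ ≤ 0` by
complementary slackness, so the coupling term is nonpositive. Finally, monotonicity of the
gradient of each convex `J_i` replaces `∇J_i(s*_i)` by `∇J_i(s_i)`.
-/

lemma dotCLM_apply {m : ℕ} (g w : Fin m → ℝ) : dotCLM g w = g ⬝ᵥ w := by
  simp [dotCLM, dotProduct]

section Convex

variable {E : Type*} [NormedAddCommGroup E] [NormedSpace ℝ E] {s : Set E} {f : E → ℝ}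

theorem ConvexOn.apply_sub_le_of_hasFDerivAt (hf : ConvexOn ℝ s f) {x y : E} (hx : x ∈ s)
    (hy : y ∈ s) {f' : E →L[ℝ] ℝ} (hf' : HasFDerivAt f f' x) : f' (y - x) ≤ f y - f x := by
  let L : ℝ →ᵃ[ℝ] E := AffineMap.lineMap x y
  have hL : HasDerivAt (f ∘ L) (f' (y - x)) 0 := by
    apply hf'.comp_hasDerivAt_of_eq 0 AffineMap.hasDerivAt_lineMap
    simp
  have h0 : (0 : ℝ) ∈ L ⁻¹' s := by simpa [L] using hx
  have h1 : (1 : ℝ) ∈ L ⁻¹' s := by simpa [L] using hy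
  simpa [slope_def_field, L] using (hf.comp_affineMap L).le_slope_of_hasDerivAt h0 h1 one_pos hL

theorem ConvexOn.apply_sub_mono_of_hasFDerivAt (hf : ConvexOn ℝ s f) {x y : E} (hx : x ∈ s)
    (hy : y ∈ s) {f'x f'y : E →L[ℝ] ℝ} (hfx : HasFDerivAt f f'x x) (hfy : HasFDerivAt f f'y y) :
    f'x (y - x) ≤ f'y (y - x) := by
  have hxy := hf.apply_sub_le_of_hasFDerivAt hx hy hfx
  have hyx := hf.apply_sub_le_of_hasFDerivAt hy hx hfy
  rw [← neg_sub, map_neg] at hyx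
  linarith

end Convex

theorem ConvexOn.gradient_dotProduct_mono {m : ℕ} {f : (Fin m → ℝ) → ℝ}
    {g : (Fin m → ℝ) → Fin m → ℝ} (hf : ConvexOn ℝ Set.univ f)
    (hg : ∀ x, HasFDerivAt f (dotCLM (g x)) x) (x y : Fin m → ℝ) :
    g x ⬝ᵥ (y - x) ≤ g y ⬝ᵥ (y - x) := by
  simpa only [dotCLM_apply] using
    hf.apply_sub_mono_of_hasFDerivAt (Set.mem_univ x) (Set.mem_univ y) (hg x) (hg y)

theorem Finset.sum_sum_filter_nonpos_of_symm {ι M : Type*} [Fintype ι] [AddCommGroup M]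
    [LinearOrder M] [IsOrderedAddMonoid M] {r : ι → ι → Prop} [DecidableRel r]
    (hr : ∀ i j, r i j → r j i) (f : ι → ι → M) (hf : ∀ i j, r i j → f i j + f j i ≤ 0) :
    ∑ i, ∑ j ∈ univ.filter (r i), f i j ≤ 0 := by
  have hswap : ∑ i, ∑ j ∈ univ.filter (r i), f j i = ∑ i, ∑ j ∈ univ.filter (r i), f i j := by
    simp only [Finset.sum_filter]
    rw [Finset.sum_comm]
    refine Finset.sum_congr rfl fun i _ => Finset.sum_congr rfl fun j _ => ?_
    rw [if_congr ⟨hr j i, hr i j⟩ rfl rfl]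
  refine add_self_nonpos_iff.mp ?_
  calc ∑ i, ∑ j ∈ univ.filter (r i), f i j + ∑ i, ∑ j ∈ univ.filter (r i), f i j
      = ∑ i, ∑ j ∈ univ.filter (r i), (f i j + f j i) := by
        simp only [Finset.sum_add_distrib, hswap]
    _ ≤ 0 := Finset.sum_nonpos fun i _ => Finset.sum_nonpos fun j hj =>
        hf i j (Finset.mem_filter.mp hj).2

section Matrix

variable {R m n p : Type*} [Fintype n] [Fintype p]

theorem Matrix.mulVec_eq_of_forall_add_mulVec_eq [Ring R] {A : Matrix m n R} {B : Matrix m p R}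
    {A' : Matrix m p R} {B' : Matrix m n R} {c c' : m → R}
    (h : ∀ x y, A *ᵥ x + B *ᵥ y + c = A' *ᵥ y + B' *ᵥ x + c') (y : p → R) :
    B *ᵥ y = A' *ᵥ y := by
  have hc : c = c' := by simpa using h 0 0
  simpa [hc] using h 0 y

theorem Matrix.add_sum_transpose_mulVec_dotProduct [CommSemiring R] [Fintype m] {ι : Type*}
    (s : Finset ι) (g v : n → R) (A : ι → Matrix m n R) (μ : ι → m → R) :
    (g + ∑ j ∈ s, (A j)ᵀ *ᵥ μ j) ⬝ᵥ v = g ⬝ᵥ v + ∑ j ∈ s, μ j ⬝ᵥ (A j *ᵥ v) := by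
  simp only [add_dotProduct, sum_dotProduct, mulVec_transpose, dotProduct_mulVec]

theorem Matrix.dotProduct_mulVec_sub_add_mulVec_sub_nonpos [CommRing R] [PartialOrder R]
    [IsOrderedRing R] [Fintype m] {A : Matrix m n R} {B : Matrix m p R} {c μ : m → R}
    {x x' : n → R} {y y' : p → R} (hμ : 0 ≤ μ) (hcomp : μ ⬝ᵥ (A *ᵥ x' + B *ᵥ y' + c) = 0)
    (hfeas : A *ᵥ x + B *ᵥ y + c ≤ 0) :
    μ ⬝ᵥ (A *ᵥ (x - x')) + μ ⬝ᵥ (B *ᵥ (y - y')) ≤ 0 := by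
  have hsplit : A *ᵥ (x - x') + B *ᵥ (y - y') =
      (A *ᵥ x + B *ᵥ y + c) - (A *ᵥ x' + B *ᵥ y' + c) := by
    simp only [mulVec_sub]
    abel
  rw [← dotProduct_add, hsplit, dotProduct_sub, hcomp, sub_zero, ← dotProduct_zero μ]
  exact dotProduct_le_dotProduct_of_nonneg_left hfeas hμ

end Matrix

theorem fair_KKT_point_is_variational_equilibrium_general
    {n q : ℕ} (d : Fin n → ℕ)
    (S : ∀ i, Set (Fin (d i) → ℝ))
    (J : ∀ i, (Fin (d i) → ℝ) → ℝ)
    (gradJ : ∀ i, (Fin (d i) → ℝ) → (Fin (d i) → ℝ))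
    (hconv : ∀ i, ConvexOn ℝ Set.univ (J i))
    (hgrad : ∀ i x, HasFDerivAt (J i) (dotCLM (gradJ i x)) x)
    (E : Fin n → Fin n → Prop) [DecidableRel E]
    (hEsymm : ∀ i j, E i j → E j i)
    (A : ∀ i j, Matrix (Fin q) (Fin (d i)) ℝ)
    (B : ∀ i j, Matrix (Fin q) (Fin (d j)) ℝ)
    (c : Fin n → Fin n → (Fin q → ℝ))
    (hsymmh : ∀ (i j : Fin n) (x : Fin (d i) → ℝ) (y : Fin (d j) → ℝ),
      A i j *ᵥ x + B i j *ᵥ y + c i j = A j i *ᵥ y + B j i *ᵥ x + c j i)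
    (sstar : ∀ i, Fin (d i) → ℝ)
    (lam : ∀ i j : Fin n, Fin q → ℝ)
    (hlampos : ∀ i j, E i j → 0 ≤ lam i j)
    (hlamsym : ∀ i j, E i j → lam i j = lam j i)
    (hcomp : ∀ i j, E i j →
      lam i j ⬝ᵥ (A i j *ᵥ sstar i + B i j *ᵥ sstar j + c i j) = 0)
    (hstat : ∀ i, ∀ y ∈ S i,
      0 ≤ (gradJ i (sstar i) +
            ∑ j ∈ Finset.univ.filter (fun j => E i j), (A i j)ᵀ *ᵥ lam i j)
          ⬝ᵥ (y - sstar i)) :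
    ∀ s : (∀ i, Fin (d i) → ℝ),
      (∀ i, s i ∈ S i) →
      (∀ i j, E i j → A i j *ᵥ s i + B i j *ᵥ s j + c i j ≤ 0) →
      0 ≤ ∑ i, gradJ i (s i) ⬝ᵥ (s i - sstar i) := by
  intro s hs hfeas
  have hcoupling : ∑ i, ∑ j ∈ Finset.univ.filter (E i),
      lam i j ⬝ᵥ (A i j *ᵥ (s i - sstar i)) ≤ 0 := by
    refine Finset.sum_sum_filter_nonpos_of_symm hEsymm _ fun i j hij => ?_
    rw [← hlamsym i j hij, ← mulVec_eq_of_forall_add_mulVec_eq (hsymmh i j)]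
    exact dotProduct_mulVec_sub_add_mulVec_sub_nonpos (hlampos i j hij) (hcomp i j hij)
      (hfeas i j hij)
  have hstat_sum : 0 ≤ ∑ i, (gradJ i (sstar i) ⬝ᵥ (s i - sstar i) +
      ∑ j ∈ Finset.univ.filter (E i), lam i j ⬝ᵥ (A i j *ᵥ (s i - sstar i))) :=
    Finset.sum_nonneg fun i _ => by
      simpa only [add_sum_transpose_mulVec_dotProduct] using hstat i (s i) (hs i)
  rw [Finset.sum_add_distrib] at hstat_sum
  calc 0 ≤ ∑ i, gradJ i (sstar i) ⬝ᵥ (s i - sstar i) := by linarith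
    _ ≤ ∑ i, gradJ i (s i) ⬝ᵥ (s i - sstar i) :=
      Finset.sum_le_sum fun i _ => (hconv i).gradient_dotProduct_mono (hgrad i) _ _

/-- Sufficiency content of Theorems 2 and 3(2): if a strategy profile `s*`,
feasible for the game with pairwise affine coupled constraints
`h_{i,j}(x, y) = A_{i,j} x + B_{i,j} y + c_{i,j} ≤ 0` (symmetric in the sense
`h_{i,j}(x,y) = h_{j,i}(y,x)`), satisfies the per-player KKT conditions with
nonnegative, complementary, and pairwise-equal multipliers `λ_{i,j} = λ_{j,i}`,
then `s*` is a variational equilibrium: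
`Σ_i ⟨∇J_i(s_i), s_i − s*_i⟩ ≥ 0` for every feasible `s ∈ K`. -/
theorem fair_KKT_point_is_variational_equilibrium
    {n q : ℕ} (d : Fin n → ℕ)
    (S : ∀ i, Set (Fin (d i) → ℝ))
    (hSclosed : ∀ i, IsClosed (S i)) (hSconvex : ∀ i, Convex ℝ (S i))
    (J : ∀ i, (Fin (d i) → ℝ) → ℝ)
    (gradJ : ∀ i, (Fin (d i) → ℝ) → (Fin (d i) → ℝ))
    (hconv : ∀ i, ConvexOn ℝ Set.univ (J i))
    (hgrad : ∀ i x, HasFDerivAt (J i) (dotCLM (gradJ i x)) x)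
    (E : Fin n → Fin n → Prop) [DecidableRel E]
    (hEsymm : ∀ i j, E i j → E j i) (hEirr : ∀ i, ¬ E i i)
    (A : ∀ i j, Matrix (Fin q) (Fin (d i)) ℝ)
    (B : ∀ i j, Matrix (Fin q) (Fin (d j)) ℝ)
    (c : Fin n → Fin n → (Fin q → ℝ))
    (hsymmh : ∀ (i j : Fin n) (x : Fin (d i) → ℝ) (y : Fin (d j) → ℝ),
      A i j *ᵥ x + B i j *ᵥ y + c i j = A j i *ᵥ y + B j i *ᵥ x + c j i)
    (sstar : ∀ i, Fin (d i) → ℝ)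
    (lam : ∀ i j : Fin n, Fin q → ℝ)
    (hfeasS : ∀ i, sstar i ∈ S i)
    (hfeash : ∀ i j, E i j → A i j *ᵥ sstar i + B i j *ᵥ sstar j + c i j ≤ 0)
    (hlampos : ∀ i j, E i j → 0 ≤ lam i j)
    (hlamsym : ∀ i j, E i j → lam i j = lam j i)
    (hcomp : ∀ i j, E i j →
      lam i j ⬝ᵥ (A i j *ᵥ sstar i + B i j *ᵥ sstar j + c i j) = 0)
    (hstat : ∀ i, ∀ y ∈ S i,
      0 ≤ (gradJ i (sstar i) +
            ∑ j ∈ Finset.univ.filter (fun j => E i j), (A i j)ᵀ *ᵥ lam i j)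
          ⬝ᵥ (y - sstar i)) :
    ∀ s : (∀ i, Fin (d i) → ℝ),
      (∀ i, s i ∈ S i) →
      (∀ i j, E i j → A i j *ᵥ s i + B i j *ᵥ s j + c i j ≤ 0) →
      0 ≤ ∑ i, gradJ i (s i) ⬝ᵥ (s i - sstar i) :=
  fair_KKT_point_is_variational_equilibrium_general d S J gradJ hconv hgrad E hEsymm A B c hsymmh
    sstar lam hlampos hlamsym hcomp hstat
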